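/- If x, y, z are Gaussian integers with xyz ≠ 0, gcd(x,y,z) = 1, and x^4 + y^4 = i·z^2, then x ∈ {1, -1, i, -i}, y ∈ {1, -1, i, -i}, and z = i(1+i) or z = -i(1+i). -/

import Mathlib

local notation "I" => (Zsqrtd.sqrtd : GaussianInt)

/-!
Call a Gaussian integer odd when it is prime to `π = 1 + i`. Odd squares are `±1 mod 4` and odd
fourth powers are `1 mod 8`. Hence if `π ∣ x`, then `i z² ≡ 1 mod 4` with `z` odd, which is
impossible; so `x` and `y` are odd, `x⁴ + y⁴ ≡ 2 mod 8` forces `z = π w` with `w` odd, and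
`η = (x⁴ - y⁴) / π²` satisfies `η² = (xy)⁴ - w⁴`. By Hilbert's theorem below `η = 0`, so
`x⁴ = y⁴`, which makes the coprime `x, y` units, and then `i z² = 2`.

Hilbert's theorem says that `X⁴ - Y⁴ = Z²` has no solution with `X, Y` odd and coprime and
`Z ≠ 0`. It is a descent on the `π`-adic valuation `t` of `Z = πᵗ W`. Write `X² - Y² = 2M` and
`X² + Y² = 2P`; exactly one of `M, P` is even (replacing `Y` by `iY` swaps them), which forces
`t ≥ 3`, and `M, P` are coprime squares up to units and powers of `π`. This yields
`p⁴ - (π^(t-2) m)⁴ = W'²` with `p, m, W'` odd. Factoring it as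
`(W' + i (π^(t-2) m)²)(W' - i (π^(t-2) m)²) = p⁴` into coprime fourth powers up to a unit `μ`
gives a solution of the first kind with valuation `t - 1`; `μ = ±i` is impossible mod `π³`.
-/

-- `⟨1, 1⟩` rather than `1 + I`, so that `ring` treats `π` as an atom.
local notation "π" => (⟨1, 1⟩ : GaussianInt)

theorem Prime.pow_dvd_pow_mul_iff_le {M : Type*} [CommMonoidWithZero M] [IsCancelMulZero M]
    {p u : M} (hp : Prime p) (hu : ¬p ∣ u) {k n : ℕ} : p ^ k ∣ p ^ n * u ↔ k ≤ n := by
  refine ⟨fun h => ?_, fun h => (pow_dvd_pow p h).mul_right u⟩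
  by_contra! hlt
  have := (pow_dvd_pow p hlt).trans h
  rw [pow_succ] at this
  exact hu ((mul_dvd_mul_iff_left (pow_ne_zero n hp.ne_zero)).1 this)

theorem exists_unit_mul_eq_pow_of_mul_eq_pow {R : Type*} [CommRing R] [IsDomain R] [IsBezout R]
    [IsIntegrallyClosed R] {a b c : R} {n : ℕ} (hab : IsCoprime a b) (h : a * b = c ^ n)
    (hc : c ≠ 0) (hn : n ≠ 0) : ∃ (μ : Rˣ) (m d : R), μ * a = m ^ n ∧ b = μ * d ^ n := by
  obtain ⟨m, u, hu⟩ := exists_associated_pow_of_mul_eq_pow' hab h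
  obtain ⟨d, rfl⟩ : m ∣ c :=
    (IsIntegrallyClosed.pow_dvd_pow_iff hn).1 ⟨u * b, by rw [← h, ← hu, mul_assoc]⟩
  have hub : u * b = d ^ n := mul_left_cancel₀ (pow_ne_zero n (left_ne_zero_of_mul hc)) <| by
    rw [← mul_assoc, hu, h, mul_pow]
  exact ⟨u⁻¹, m, d, by rw [← hu, mul_comm, mul_assoc, Units.mul_inv, mul_one],
    by rw [← hub, Units.inv_mul_cancel_left]⟩

theorem IsCoprime.isUnit_of_pow_eq_pow {R : Type*} [CommSemiring R] {x y : R} {n : ℕ}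
    (hxy : IsCoprime x y) (h : x ^ n = y ^ n) (hn : n ≠ 0) : IsUnit x := by
  have := hxy.pow (m := n) (n := n)
  rwa [← h, isCoprime_self, isUnit_pow_iff hn] at this

namespace GaussianInt

theorem pi_dvd_iff (w : GaussianInt) : π ∣ w ↔ 2 ∣ w.re + w.im := by
  constructor
  · rintro ⟨c, rfl⟩
    exact ⟨c.re, by simp; ring⟩
  · rintro ⟨k, hk⟩
    exact ⟨⟨k, w.im - k⟩, by ext <;> simp; linarith⟩

theorem prime_pi : Prime π := by
  refine ⟨by decide, fun h => by simpa using (pi_dvd_iff 1).1 h.dvd, fun a b h => ?_⟩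
  simp only [pi_dvd_iff] at h ⊢
  have hab : (a.re + a.im) * (b.re + b.im) = (a * b).re + (a * b).im + 2 * (a.im * b.im) := by
    simp; ring
  exact Int.prime_two.dvd_mul.1 (hab ▸ dvd_add h (dvd_mul_right 2 _))

theorem pi_dvd_add {a b : GaussianInt} (ha : ¬π ∣ a) (hb : ¬π ∣ b) : π ∣ a + b := by
  rw [pi_dvd_iff] at *
  simp only [Zsqrtd.re_add, Zsqrtd.im_add]
  omega

theorem not_pi_dvd_of_isUnit {u : GaussianInt} (hu : IsUnit u) : ¬π ∣ u :=
  fun h => prime_pi.not_isUnit (isUnit_of_dvd_unit h hu)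

theorem four_dvd_sq_sub_one_or_sq_add_one {x : GaussianInt} (hx : ¬π ∣ x) :
    4 ∣ x ^ 2 - 1 ∨ 4 ∣ x ^ 2 + 1 := by
  rw [pi_dvd_iff] at hx
  obtain ⟨a, b⟩ := x
  rcases Int.even_or_odd' a with ⟨k, rfl | rfl⟩
  · obtain ⟨l, rfl⟩ : ∃ l, b = 2 * l + 1 := ⟨b / 2, by simp at hx; omega⟩
    exact Or.inr ⟨⟨k ^ 2 - l ^ 2 - l, k * (2 * l + 1)⟩, by ext <;> simp [sq] <;> ring⟩
  · obtain ⟨l, rfl⟩ : ∃ l, b = 2 * l := ⟨b / 2, by simp at hx; omega⟩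
    exact Or.inl ⟨⟨k ^ 2 + k - l ^ 2, (2 * k + 1) * l⟩, by ext <;> simp [sq] <;> ring⟩

theorem eight_dvd_pow_four_sub_one {x : GaussianInt} (hx : ¬π ∣ x) : 8 ∣ x ^ 4 - 1 := by
  rcases four_dvd_sq_sub_one_or_sq_add_one hx with ⟨k, hk⟩ | ⟨k, hk⟩
  · exact ⟨k * (2 * k + 1), by linear_combination (x ^ 2 + 4 * k + 1) * hk⟩
  · exact ⟨k * (2 * k - 1), by linear_combination (x ^ 2 + 4 * k - 1) * hk⟩

theorem I_sq : I ^ 2 = -1 := by decide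

theorem pi_sq : π ^ 2 = 2 * I := by decide

theorem pi_pow_four : π ^ 4 = -4 := by decide

theorem isUnit_iff {x : GaussianInt} : IsUnit x ↔ x = 1 ∨ x = -1 ∨ x = I ∨ x = -I := by
  refine ⟨fun hx => ?_, fun hx => Zsqrtd.norm_eq_one_iff.1 ?_⟩
  swap
  · rcases hx with rfl | rfl | rfl | rfl <;> decide
  obtain ⟨a, b⟩ := x
  have hnorm : a ^ 2 + b ^ 2 = 1 := by
    have := (Zsqrtd.norm_eq_one_iff' (by norm_num) _).2 hx
    simp only [Zsqrtd.norm_def] at this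
    linear_combination this
  obtain ⟨ha₁, ha₂⟩ : -1 ≤ a ∧ a ≤ 1 := ⟨by nlinarith, by nlinarith⟩
  obtain ⟨hb₁, hb₂⟩ : -1 ≤ b ∧ b ≤ 1 := ⟨by nlinarith, by nlinarith⟩
  interval_cases a <;> interval_cases b <;> simp_all <;> decide

theorem isUnit_I : IsUnit I := isUnit_iff.2 (by simp)

theorem pow_four_eq_one_of_isUnit {u : GaussianInt} (hu : IsUnit u) : u ^ 4 = 1 := by
  rcases isUnit_iff.1 hu with rfl | rfl | rfl | rfl <;> decide

theorem not_pi_pow_three_dvd_pow_four_add_pow_four {m n : GaussianInt} (hm : ¬π ∣ m)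
    (hn : ¬π ∣ n) : ¬π ^ 3 ∣ m ^ 4 + n ^ 4 := by
  intro h
  have h8 : π ^ 3 ∣ 8 := ⟨π ^ 3 * I, by decide⟩
  have h2 : π ^ 3 ∣ π ^ 2 * -I := by
    have := dvd_sub h (dvd_add (h8.trans (eight_dvd_pow_four_sub_one hm))
      (h8.trans (eight_dvd_pow_four_sub_one hn)))
    convert this using 1
    rw [show π ^ 2 * -I = 2 by decide]
    ring
  have := (prime_pi.pow_dvd_pow_mul_iff_le (not_pi_dvd_of_isUnit isUnit_I.neg)).1 h2
  omega

theorem not_four_dvd_I_mul_sq_sub_one {z : GaussianInt} (hz : ¬π ∣ z) : ¬4 ∣ I * z ^ 2 - 1 := by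
  intro h
  have h4 : ∀ w : GaussianInt, 4 ∣ w ↔ 4 ∣ w.re ∧ 4 ∣ w.im := Zsqrtd.intCast_dvd 4
  rcases four_dvd_sq_sub_one_or_sq_add_one hz with h' | h'
  · have := dvd_sub h (h'.mul_left I)
    rw [show I * z ^ 2 - 1 - I * (z ^ 2 - 1) = I - 1 by ring, h4] at this
    revert this; decide
  · have := dvd_sub h (h'.mul_left I)
    rw [show I * z ^ 2 - 1 - I * (z ^ 2 + 1) = -I - 1 by ring, h4] at this
    revert this; decide

def EvenZSolution (t : ℕ) : Prop :=
  ∃ X Y W : GaussianInt, ¬π ∣ X ∧ ¬π ∣ Y ∧ ¬π ∣ W ∧ IsCoprime X Y ∧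
    X ^ 4 - Y ^ 4 = (π ^ t * W) ^ 2

def EvenYSolution (e : ℕ) : Prop :=
  ∃ X Y W : GaussianInt, ¬π ∣ X ∧ ¬π ∣ Y ∧ ¬π ∣ W ∧ IsCoprime X Y ∧
    X ^ 4 - (π ^ (e + 1) * Y) ^ 4 = W ^ 2

theorem exists_evenYSolution_of_eq_sum_of_eq_sub {X Y W M P : GaussianInt} {t : ℕ}
    (hX : ¬π ∣ X) (hY : ¬π ∣ Y) (hW : ¬π ∣ W) (hXY : IsCoprime X Y)
    (hsum : X ^ 2 = M + P) (hdiff : Y ^ 2 = P - M) (hM : π ∣ M)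
    (h : X ^ 4 - Y ^ 4 = (π ^ t * W) ^ 2) : ∃ s, t = s + 3 ∧ EvenYSolution s := by
  have hP : ¬π ∣ P := fun hP => hX (prime_pi.dvd_of_dvd_pow (n := 2) (hsum ▸ dvd_add hM hP))
  have hW2 : ¬π ∣ W ^ 2 := fun h => hW (prime_pi.dvd_of_dvd_pow h)
  have hMP : π ^ 4 * -(M * P) = π ^ (2 * t) * W ^ 2 := by
    rw [pow_mul', ← mul_pow, ← h, pi_pow_four]
    linear_combination (-(X ^ 2 + M + P)) * hsum + (Y ^ 2 + P - M) * hdiff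
  obtain ⟨s, rfl⟩ : ∃ s, t = s + 3 := by
    obtain ⟨M', rfl⟩ := hM
    have h5 : π ^ 5 ∣ π ^ (2 * t) * W ^ 2 := hMP ▸ ⟨-(M' * P), by ring⟩
    have := (prime_pi.pow_dvd_pow_mul_iff_le hW2).1 h5
    exact ⟨t - 3, by omega⟩
  refine ⟨s, rfl, ?_⟩
  have hPM : P * -M = π ^ (2 * s + 2) * W ^ 2 :=
    mul_left_cancel₀ (pow_ne_zero 4 prime_pi.ne_zero) (by linear_combination hMP)
  obtain ⟨N, hN⟩ := prime_pi.pow_dvd_of_dvd_mul_left _ hP ⟨W ^ 2, hPM⟩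
  have hNP : N * P = W ^ 2 :=
    mul_left_cancel₀ (pow_ne_zero (2 * s + 2) prime_pi.ne_zero) (by linear_combination hPM - P * hN)
  have hNP_coprime : IsCoprime N P := IsRelPrime.isCoprime fun d hdN hdP => by
    have hdM : d ∣ M := by
      rw [show M = -(π ^ (2 * s + 2) * N) by linear_combination -hN]
      exact dvd_neg.2 (hdN.mul_left _)
    exact (hXY.pow (m := 2) (n := 2)).isUnit_of_dvd' (hsum ▸ dvd_add hdM hdP)
      (hdiff ▸ dvd_sub hdP hdM)
  obtain ⟨μ, m, p, hm, hp⟩ := exists_unit_mul_eq_pow_of_mul_eq_pow hNP_coprime hNP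
    (fun h0 => hW (h0 ▸ dvd_zero π)) two_ne_zero
  have hμ := pow_four_eq_one_of_isUnit μ.isUnit
  refine ⟨p, m, μ * (X * Y), fun h => hP (hp ▸ (dvd_pow h two_ne_zero).mul_left _),
    fun h => hW2 (hNP ▸ (Units.dvd_mul_left.1 (hm ▸ dvd_pow h two_ne_zero)).mul_right P),
    prime_pi.not_dvd_mul (not_pi_dvd_of_isUnit μ.isUnit) (prime_pi.not_dvd_mul hX hY),
    (hNP_coprime.symm.of_isCoprime_of_dvd_left (hp ▸ (dvd_pow_self p two_ne_zero).mul_left _)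
      ).of_isCoprime_of_dvd_right (Units.dvd_mul_left.1 (hm ▸ dvd_pow_self m two_ne_zero)), ?_⟩
  -- `(μXY)² = μ² (P² - M²)`, where `μ² P² = p⁴` and `μ² M² = (π^(s+1) m)⁴`.
  linear_combination (μ : GaussianInt) ^ 2 * (-Y ^ 2 * hsum - (M + P) * hdiff
    - (P + μ * p ^ 2) * hp + (-M + π ^ (2 * s + 2) * N) * hN) - p ^ 4 * hμ
    + (π ^ (2 * s + 2)) ^ 2 * (μ * N + m ^ 2) * hm

theorem EvenZSolution.exists_evenYSolution {t : ℕ} (h : EvenZSolution t) :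
    ∃ s, t = s + 3 ∧ EvenYSolution s := by
  obtain ⟨X, Y, W, hX, hY, hW, hXY, h⟩ := h
  have hY' : ¬π ∣ -Y := fun h => hY (dvd_neg.1 h)
  obtain ⟨a, ha⟩ := pi_dvd_add hX hY'
  obtain ⟨b, hb⟩ := pi_dvd_add hX hY
  have hsum : X ^ 2 = I * a * b + (I * a * b + Y ^ 2) := by
    linear_combination (X + Y) * ha + π * a * hb + a * b * pi_sq
  by_cases hM : π ∣ I * a * b
  · exact exists_evenYSolution_of_eq_sum_of_eq_sub hX hY hW hXY hsum (by ring) hM h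
  · refine exists_evenYSolution_of_eq_sum_of_eq_sub (Y := I * Y) (M := I * a * b + Y ^ 2)
      (P := I * a * b) hX
      (prime_pi.not_dvd_mul (not_pi_dvd_of_isUnit isUnit_I) hY) hW
      ((isCoprime_mul_unit_left_right isUnit_I X Y).2 hXY) (by linear_combination hsum)
      (by linear_combination Y ^ 2 * I_sq) ?_ (by linear_combination h - Y ^ 4 * (I ^ 2 - 1) * I_sq)
    by_contra hP
    exact hX (prime_pi.dvd_of_dvd_pow (n := 2) (by rw [hsum, add_comm]; exact pi_dvd_add hP hM))

theorem EvenYSolution.evenZSolution {e : ℕ} (h : EvenYSolution e) : EvenZSolution (e + 2) := by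
  obtain ⟨X, Y, W, hX, hY, hW, hXY, h⟩ := h
  obtain ⟨V, hV⟩ : ∃ V, V = (π ^ (e + 1) * Y) ^ 2 := ⟨_, rfl⟩
  have hπV : π ∣ V := hV ▸ ((dvd_pow_self π e.succ_ne_zero).mul_right Y).pow two_ne_zero
  have hF : (W + I * V) * (W - I * V) = X ^ 4 := by
    linear_combination -h + ((π ^ (e + 1) * Y) ^ 2 + V) * hV - V ^ 2 * I_sq
  have hodd_add : ¬π ∣ W + I * V := fun hd => hW (by simpa using dvd_sub hd (hπV.mul_left I))
  have hodd_sub : ¬π ∣ W - I * V := fun hd => hW (by simpa using dvd_add hd (hπV.mul_left I))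
  have hF_diff : (W + I * V) - (W - I * V) = Y ^ 2 * π ^ (2 * e + 4) := by
    linear_combination 2 * I * hV - (π ^ (e + 1) * Y) ^ 2 * pi_sq
  have hF_coprime : IsCoprime (W + I * V) (W - I * V) := IsRelPrime.isCoprime fun d hd₁ hd₂ => by
    have hdY : d ∣ Y ^ 2 :=
      ((prime_pi.coprime_iff_not_dvd.2 fun hπ => hodd_add (hπ.trans hd₁)).pow_left.symm
        ).dvd_of_dvd_mul_right (hF_diff ▸ dvd_sub hd₁ hd₂)
    exact (hXY.pow (m := 4) (n := 2)).isUnit_of_dvd' (hd₁.trans ⟨_, hF.symm⟩) hdY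
  obtain ⟨μ, m, n, hm, hn⟩ := exists_unit_mul_eq_pow_of_mul_eq_pow hF_coprime hF
    (fun h0 => hX (h0 ▸ dvd_zero π)) four_ne_zero
  have hmn : m ^ 4 - μ ^ 2 * n ^ 4 = μ * (π ^ (e + 2) * Y) ^ 2 := by
    linear_combination -hm + μ * hn + 2 * μ * I * hV - μ * (π ^ (e + 1) * Y) ^ 2 * pi_sq
  have hm_odd : ¬π ∣ m := fun h => hodd_add (Units.dvd_mul_left.1 (hm ▸ dvd_pow h four_ne_zero))
  have hn_odd : ¬π ∣ n := fun h => hodd_sub (hn ▸ (dvd_pow h four_ne_zero).mul_left _)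
  have hmn_coprime : IsCoprime m n :=
    (hF_coprime.of_isCoprime_of_dvd_left (Units.dvd_mul_left.1 (hm ▸ dvd_pow_self m four_ne_zero))
      ).of_isCoprime_of_dvd_right (hn ▸ (dvd_pow_self n four_ne_zero).mul_left _)
  rcases isUnit_iff.1 μ.isUnit with hμ | hμ | hμ
  · rw [hμ] at hmn
    exact ⟨m, n, Y, hm_odd, hn_odd, hY, hmn_coprime, by linear_combination hmn⟩
  · rw [hμ] at hmn
    exact ⟨m, n, I * Y, hm_odd, hn_odd, prime_pi.not_dvd_mul (not_pi_dvd_of_isUnit isUnit_I) hY,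
      hmn_coprime, by linear_combination hmn - (π ^ (e + 2) * Y) ^ 2 * I_sq⟩
  · have hμ2 : (μ : GaussianInt) ^ 2 = -1 := by rcases hμ with hμ | hμ <;> rw [hμ] <;> decide
    exact absurd ⟨μ * π ^ (2 * e + 1) * Y ^ 2, by linear_combination hmn + n ^ 4 * hμ2⟩
      (not_pi_pow_three_dvd_pow_four_add_pow_four hm_odd hn_odd)

theorem not_evenZSolution (t : ℕ) : ¬EvenZSolution t := by
  induction t with
  | zero =>
    intro h
    obtain ⟨s, hs, -⟩ := h.exists_evenYSolution
    omega
  | succ t ih =>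
    intro h
    obtain ⟨s, hs, hB⟩ := h.exists_evenYSolution
    exact ih (by simpa [show t = s + 2 by omega] using hB.evenZSolution)

theorem eq_zero_of_pow_four_sub_pow_four_eq_sq {X Y Z : GaussianInt} (hX : ¬π ∣ X) (hY : ¬π ∣ Y)
    (hXY : IsCoprime X Y) (h : X ^ 4 - Y ^ 4 = Z ^ 2) : Z = 0 := by
  by_contra hZ
  obtain ⟨t, W, hW, rfl⟩ := WfDvdMonoid.max_power_factor hZ prime_pi.irreducible
  exact not_evenZSolution t ⟨X, Y, W, hX, hY, hW, hXY, h⟩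

theorem isCoprime_of_pow_four_add_pow_four_eq {x y z : GaussianInt} (hxy : IsCoprime x y)
    (h : x ^ 4 + y ^ 4 = I * z ^ 2) : IsCoprime x z := by
  have : IsCoprime (x ^ 4) (I * z ^ 2) := by
    simpa [← h, add_comm] using (hxy.pow (m := 4) (n := 4)).add_mul_left_right 1
  exact (this.of_isCoprime_of_dvd_left (dvd_pow_self x four_ne_zero)).of_isCoprime_of_dvd_right
    ((dvd_pow_self z two_ne_zero).mul_left I)

theorem not_pi_dvd_of_pow_four_add_pow_four_eq {x y z : GaussianInt} (hxy : IsCoprime x y)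
    (hxz : IsCoprime x z) (h : x ^ 4 + y ^ 4 = I * z ^ 2) : ¬π ∣ x := by
  intro hx
  have hy : ¬π ∣ y := fun hy => prime_pi.not_isUnit (hxy.isUnit_of_dvd' hx hy)
  have hz : ¬π ∣ z := fun hz => prime_pi.not_isUnit (hxz.isUnit_of_dvd' hx hz)
  have h4x : 4 ∣ x ^ 4 := neg_dvd.1 (pi_pow_four ▸ pow_dvd_pow_of_dvd hx 4)
  have h4y : 4 ∣ y ^ 4 - 1 := (show (4 : GaussianInt) ∣ 8 from ⟨2, by norm_num⟩).trans
    (eight_dvd_pow_four_sub_one hy)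
  exact not_four_dvd_I_mul_sq_sub_one hz (by simpa [← h, add_sub_assoc] using dvd_add h4x h4y)

theorem pow_four_eq_pow_four_of_pow_four_add_pow_four_eq {x y z : GaussianInt} (hx : ¬π ∣ x)
    (hy : ¬π ∣ y) (hxz : IsCoprime x z) (hyz : IsCoprime y z) (h : x ^ 4 + y ^ 4 = I * z ^ 2) :
    x ^ 4 = y ^ 4 := by
  have hx4 : ¬π ∣ x ^ 4 := fun h => hx (prime_pi.dvd_of_dvd_pow h)
  have hy4 : ¬π ∣ y ^ 4 := fun h => hy (prime_pi.dvd_of_dvd_pow h)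
  obtain ⟨w, rfl⟩ : π ∣ z :=
    prime_pi.dvd_of_dvd_pow (n := 2) (isUnit_I.dvd_mul_left.1 (h ▸ pi_dvd_add hx4 hy4))
  have hw : ¬π ∣ w := by
    rintro ⟨v, rfl⟩
    exact not_pi_pow_three_dvd_pow_four_add_pow_four hx hy (h ▸ ⟨π * I * v ^ 2, by ring⟩)
  obtain ⟨η, hη⟩ : π ^ 2 ∣ x ^ 4 - y ^ 4 := (show π ^ 2 ∣ 8 from ⟨-4 * I, by decide⟩).trans
    (by simpa using dvd_sub (eight_dvd_pow_four_sub_one hx) (eight_dvd_pow_four_sub_one hy))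
  have hη2 : η ^ 2 = (x * y) ^ 4 - w ^ 4 := mul_left_cancel₀ (pow_ne_zero 4 prime_pi.ne_zero) <| by
    linear_combination (-(x ^ 4 - y ^ 4 + π ^ 2 * η)) * hη + (x ^ 4 + y ^ 4 + I * (π * w) ^ 2) * h
      + π ^ 4 * w ^ 4 * I_sq - (x * y) ^ 4 * pi_pow_four
  have hη0 := eq_zero_of_pow_four_sub_pow_four_eq_sq (prime_pi.not_dvd_mul hx hy) hw
    ((hxz.mul_left hyz).of_isCoprime_of_dvd_right (dvd_mul_left w π)) hη2.symm
  exact sub_eq_zero.1 (by rw [hη, hη0, mul_zero])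

theorem eq_or_eq_neg_of_I_mul_sq_eq_two {z : GaussianInt} (h : I * z ^ 2 = 2) :
    z = I * (1 + I) ∨ z = -(I * (1 + I)) :=
  sq_eq_sq_iff_eq_or_eq_neg.1 (mul_left_cancel₀ isUnit_I.ne_zero (by rw [h]; decide))

end GaussianInt

theorem stmt_1_general (x y z : GaussianInt)
    (hgcd : ∀ d : GaussianInt, d ∣ x → d ∣ y → d ∣ z → IsUnit d)
    (heq : x ^ 4 + y ^ 4 = I * z ^ 2) :
    (x = 1 ∨ x = -1 ∨ x = I ∨ x = -I) ∧
    (y = 1 ∨ y = -1 ∨ y = I ∨ y = -I) ∧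
    (z = I * (1 + I) ∨ z = -(I * (1 + I))) := by
  open GaussianInt in
  have hxy : IsCoprime x y := IsRelPrime.isCoprime fun d hdx hdy => hgcd d hdx hdy <| by
    have : (d ^ 2) ^ 2 ∣ z ^ 2 := by
      rw [← pow_mul]
      exact isUnit_I.dvd_mul_left.1
        (heq ▸ dvd_add (pow_dvd_pow_of_dvd hdx 4) (pow_dvd_pow_of_dvd hdy 4))
    exact (dvd_pow_self d two_ne_zero).trans
      ((IsIntegrallyClosed.pow_dvd_pow_iff two_ne_zero).1 this)
  have heq' : y ^ 4 + x ^ 4 = I * z ^ 2 := by rw [add_comm, heq]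
  have hxz := isCoprime_of_pow_four_add_pow_four_eq hxy heq
  have hyz := isCoprime_of_pow_four_add_pow_four_eq hxy.symm heq'
  have h44 := pow_four_eq_pow_four_of_pow_four_add_pow_four_eq
    (not_pi_dvd_of_pow_four_add_pow_four_eq hxy hxz heq)
    (not_pi_dvd_of_pow_four_add_pow_four_eq hxy.symm hyz heq') hxz hyz heq
  have hx := hxy.isUnit_of_pow_eq_pow h44 four_ne_zero
  have hy := hxy.symm.isUnit_of_pow_eq_pow h44.symm four_ne_zero
  refine ⟨isUnit_iff.1 hx, isUnit_iff.1 hy, eq_or_eq_neg_of_I_mul_sq_eq_two ?_⟩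
  rw [← heq, pow_four_eq_one_of_isUnit hx, pow_four_eq_one_of_isUnit hy]
  norm_num

/-- The only nontrivial primitive solutions in Gaussian integers of
`x⁴ + y⁴ = i·z²` have `x, y ∈ {1, -1, i, -i}` and `z = ±i(1+i)`. -/
theorem stmt_1 (x y z : GaussianInt)
    (hnt : x * y * z ≠ 0)
    (hgcd : ∀ d : GaussianInt, d ∣ x → d ∣ y → d ∣ z → IsUnit d)
    (heq : x ^ 4 + y ^ 4 = I * z ^ 2) :
    (x = 1 ∨ x = -1 ∨ x = I ∨ x = -I) ∧
    (y = 1 ∨ y = -1 ∨ y = I ∨ y = -I) ∧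
    (z = I * (1 + I) ∨ z = -(I * (1 + I))) :=
  stmt_1_general x y z hgcd heq
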